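/- For every integer k ≥ 0, D^k(Z^2) is a polynomial in Z with nonnegative integer coefficients of degree 2k+2, with leading coefficient (2k)!! = 2^k·k!, where D = q·d/dq and Z = Σ_{n≥1} n^n q^n/n!. -/

import Mathlib

open Polynomial Finset

/-- Abel polynomials `Ã_k(x) = x(x+k)^{k-1}`, with `Ã_0 = 1`. -/
noncomputable def abelP (k : ℕ) : Polynomial ℚ :=
  if k = 0 then 1 else X * (X + C (k : ℚ)) ^ (k - 1)

lemma Ab_zero : abelP 0 = 1 := rfl

lemma Ab_succ (k : ℕ) : abelP (k+1) = X * (X + C ((k:ℚ)+1)) ^ k := by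
  simp [abelP]

lemma Ab_deriv (k : ℕ) :
    derivative (abelP k) = C (k : ℚ) * ((abelP (k-1)).comp (X + 1)) := by
  match k with
  | 0 => simp [abelP]
  | 1 => simp [abelP]
  | (m+2) =>
    rw [show m+2-1 = m+1 from rfl, Ab_succ, Ab_succ]
    rw [derivative_mul, derivative_X, derivative_pow, derivative_add, derivative_X,
      derivative_C]
    simp only [mul_comp, X_comp, pow_comp, add_comp, C_comp]
    push_cast
    simp only [C_add, C_1, map_ofNat]
    ring

lemma poly_eq_of {P Q : ℚ[X]} (h1 : derivative P = derivative Q) (h2 : P.eval 0 = Q.eval 0) :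
    P = Q := by
  have h : derivative (P - Q) = 0 := by rw [derivative_sub, h1, sub_self]
  have h3 := eq_C_of_derivative_eq_zero h
  have h0 : (P - Q).coeff 0 = 0 := by
    rw [coeff_zero_eq_eval_zero]; simp [h2]
  rw [h0, map_zero] at h3
  exact sub_eq_zero.mp h3

lemma abel_expand (n : ℕ) :
    (X + C (n:ℚ)) ^ n =
      ∑ k ∈ Finset.range (n+1), C ((n.choose k : ℚ) * ((n-k : ℕ):ℚ) ^ (n-k)) * abelP k := by
  induction n with
  | zero => simp [abelP]
  | succ n ih =>
    have hstep : ∀ i ∈ Finset.range (n+1),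
        C (((n+1).choose (i+1) : ℚ) * ((n+1-(i+1) : ℕ):ℚ) ^ (n+1-(i+1))) *
          (C ((i+1:ℕ):ℚ) * (abelP (i+1-1)).comp (X+1))
        = C ((n:ℚ)+1) * (C ((n.choose i : ℚ) * ((n-i:ℕ):ℚ)^(n-i)) * (abelP i).comp (X+1)) := by
      intro i _
      have h1 : n+1-(i+1) = n-i := Nat.succ_sub_succ n i
      have h2 : (((n+1).choose (i+1) : ℕ) : ℚ) * ((i:ℚ)+1) = ((n:ℚ)+1) * (n.choose i : ℕ) := by
        exact_mod_cast congrArg (Nat.cast (R := ℚ)) (Nat.add_one_mul_choose_eq n i).symm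
      rw [h1, Nat.add_sub_cancel, ← mul_assoc, ← mul_assoc, ← C_mul, ← C_mul]
      congr 1
      congr 1
      push_cast
      linear_combination ((n-i:ℕ):ℚ)^(n-i) * h2
    have hs : ∑ i ∈ Finset.range (n+1),
          C ((n.choose i : ℚ) * ((n-i:ℕ):ℚ)^(n-i)) * (abelP i).comp (X+1)
        = ((X + C (n:ℚ))^n).comp (X+1) := by
      rw [ih, Polynomial.sum_comp]
      simp only [mul_comp, C_comp]
    apply poly_eq_of
    · rw [derivative_pow, derivative_add, derivative_X, derivative_C, add_zero, mul_one,
        derivative_sum]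
      simp only [derivative_C_mul, Ab_deriv]
      rw [Finset.sum_range_succ']
      simp only [Nat.cast_zero, map_zero, zero_mul, mul_zero, add_zero]
      rw [Finset.sum_congr rfl hstep, ← Finset.mul_sum, hs]
      simp only [pow_comp, add_comp, X_comp, C_comp]
      push_cast
      simp only [C_add, C_1]
      ring
    · rw [eval_pow, eval_add, eval_X, eval_C, zero_add]
      rw [Polynomial.eval_finset_sum, Finset.sum_range_succ']
      have hzero : ∀ i ∈ Finset.range (n+1),
          eval 0 (C (((n+1).choose (i+1) : ℚ) * ((n+1-(i+1) : ℕ):ℚ) ^ (n+1-(i+1))) * abelP (i+1))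
          = 0 := by
        intro i _
        simp [abelP]
      rw [Finset.sum_congr rfl hzero]
      simp [abelP]

lemma key (n : ℕ) :
    (n:ℚ) * (n:ℚ)^(n-1) =
      ∑ k ∈ Finset.range (n+1),
        (n.choose k : ℚ) * (if k = 0 then 0 else (k:ℚ)^(k-1)) * ((n-k:ℕ):ℚ)^(n-k) := by
  have h2 := congrArg (fun p : ℚ[X] => eval 0 (derivative p)) (abel_expand n)
  simp only [derivative_pow, derivative_add, derivative_X, derivative_C, add_zero, mul_one,
    derivative_sum, derivative_C_mul, Ab_deriv, eval_mul, eval_C, eval_pow, eval_add, eval_X,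
    zero_add, eval_comp, eval_one, Polynomial.eval_finset_sum] at h2
  rw [h2]
  apply Finset.sum_congr rfl
  intro k _
  match k with
  | 0 => simp
  | 1 => simp [abelP]
  | (m+2) =>
    rw [show m+2-1 = m+1 from rfl, if_neg (Nat.succ_ne_zero _), Ab_succ]
    simp only [eval_mul, eval_X, eval_pow, eval_add, eval_C, eval_one]
    push_cast
    ring

/-- `Z(q) = Σ_{n≥1} n^n q^n / n!`. -/
noncomputable def Z : PowerSeries ℚ :=
  PowerSeries.mk fun n => if n = 0 then 0 else (n : ℚ) ^ n / n.factorial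

/-- The Euler derivation `D = q · d/dq`. -/
noncomputable def D (f : PowerSeries ℚ) : PowerSeries ℚ :=
  PowerSeries.mk fun n => (n : ℚ) * PowerSeries.coeff n f

/-- The tree function `T(q) = Σ_{n≥1} n^{n-1} q^n / n!`. -/
noncomputable def T : PowerSeries ℚ :=
  PowerSeries.mk fun n => if n = 0 then 0 else (n : ℚ) ^ (n-1) / n.factorial

open PowerSeries

lemma coeff_D (f : PowerSeries ℚ) (n : ℕ) : coeff n (D f) = n * coeff n f :=
  coeff_mk _ _

lemma D_add (f g : PowerSeries ℚ) : D (f + g) = D f + D g := by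
  ext n; simp [coeff_D, mul_add]

lemma D_mul (f g : PowerSeries ℚ) : D (f * g) = D f * g + f * D g := by
  ext n
  rw [coeff_D, PowerSeries.coeff_mul, map_add, PowerSeries.coeff_mul, PowerSeries.coeff_mul,
    Finset.mul_sum, ← Finset.sum_add_distrib]
  apply Finset.sum_congr rfl
  intro p hp
  have hpn : p.1 + p.2 = n := Finset.HasAntidiagonal.mem_antidiagonal.mp hp
  rw [coeff_D, coeff_D, ← hpn]
  push_cast
  ring

lemma D_T : D T = Z := by
  ext n
  rw [coeff_D]
  simp only [T, Z, coeff_mk]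
  match n with
  | 0 => simp
  | (m+1) =>
    rw [if_neg (Nat.succ_ne_zero m), if_neg (Nat.succ_ne_zero m), Nat.add_sub_cancel]
    rw [pow_succ]
    ring

lemma Z_eq : Z = T + T * Z := by
  ext n
  rw [map_add, PowerSeries.coeff_mul, Finset.Nat.sum_antidiagonal_eq_sum_range_succ_mk]
  match n with
  | 0 => simp [Z, T]
  | (m+1) =>
    have hterm : ∀ k ∈ Finset.range (m+1),
        coeff k T * coeff (m+1-k) Z
          = ((m+1).choose k : ℚ) * (if k = 0 then 0 else (k:ℚ)^(k-1)) * ((m+1-k:ℕ):ℚ)^(m+1-k)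
            / ((m+1).factorial : ℚ) := by
      intro k hk
      have hk' : k < m+1 := Finset.mem_range.mp hk
      rcases Nat.eq_zero_or_pos k with rfl | hkpos
      · simp [T]
      · have h1 : k ≠ 0 := hkpos.ne'
        have h2 : m+1-k ≠ 0 := Nat.sub_ne_zero_of_lt hk'
        simp only [T, Z, coeff_mk, if_neg h1, if_neg h2]
        rw [Nat.cast_choose ℚ (le_of_lt hk')]
        have hk2 : (k.factorial : ℚ) ≠ 0 := by exact_mod_cast k.factorial_ne_zero
        have hk3 : (((m+1)-k).factorial : ℚ) ≠ 0 := by exact_mod_cast ((m+1)-k).factorial_ne_zero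
        have hk4 : ((m+1).factorial : ℚ) ≠ 0 := by exact_mod_cast (m+1).factorial_ne_zero
        field_simp
    rw [Finset.sum_range_succ, Finset.sum_congr rfl hterm]
    have hZ0 : coeff (m+1-(m+1)) Z = 0 := by simp [Z]
    rw [hZ0, mul_zero, add_zero, ← Finset.sum_div]
    have hkey := key (m+1)
    rw [Finset.sum_range_succ] at hkey
    simp only [Nat.choose_self, Nat.cast_one, one_mul, Nat.sub_self, Nat.cast_zero, pow_zero,
      mul_one, if_neg (Nat.succ_ne_zero m), Nat.add_sub_cancel] at hkey
    simp only [Z, T, coeff_mk, if_neg (Nat.succ_ne_zero m), Nat.add_sub_cancel]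
    have hk4 : ((m+1).factorial : ℚ) ≠ 0 := by exact_mod_cast (m+1).factorial_ne_zero
    rw [← add_div, div_eq_div_iff hk4 hk4]
    linear_combination ((m+1).factorial : ℚ) * hkey

lemma one_sub : (1 + Z) * (1 - T) = 1 := by linear_combination Z_eq

lemma D_one : D 1 = 0 := by
  ext n
  rcases n with _ | m <;> simp [coeff_D, PowerSeries.coeff_one]

lemma D_C_mul (a : ℚ) (f : PowerSeries ℚ) :
    D (PowerSeries.C a * f) = PowerSeries.C a * D f := by
  ext n
  simp only [coeff_D, PowerSeries.coeff_C_mul]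
  ring

lemma D_natCast_mul (a : ℕ) (f : PowerSeries ℚ) :
    D ((a : PowerSeries ℚ) * f) = (a : PowerSeries ℚ) * D f := by
  rw [← map_natCast (PowerSeries.C) a, D_C_mul]

lemma D_Z : D Z = Z * (1 + Z)^2 := by
  have h : D Z = Z + Z*Z + T * D Z := by
    conv_lhs => rw [Z_eq]
    rw [D_add, D_mul, D_T]
    ring
  linear_combination (1 + Z) * h - D Z * one_sub

lemma D_pow_succ (f : PowerSeries ℚ) (m : ℕ) :
    D (f ^ (m+1)) = ((m+1 : ℕ) : PowerSeries ℚ) * f^m * D f := by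
  induction m with
  | zero => simp [pow_one]
  | succ m ih =>
    rw [pow_succ, D_mul, ih]
    push_cast
    ring

lemma D_eval₂ (P : Polynomial ℕ) :
    D (Polynomial.eval₂ (Nat.castRingHom (PowerSeries ℚ)) Z P)
      = Polynomial.eval₂ (Nat.castRingHom (PowerSeries ℚ)) Z (Polynomial.derivative P) * D Z := by
  induction P using Polynomial.induction_on' with
  | add p q hp hq =>
    rw [Polynomial.eval₂_add, D_add, hp, hq, Polynomial.derivative_add, Polynomial.eval₂_add]
    ring
  | monomial i a =>
    rw [Polynomial.eval₂_monomial, Polynomial.derivative_monomial, Polynomial.eval₂_monomial]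
    simp only [Nat.coe_castRingHom]
    match i with
    | 0 =>
      have h0 : D ((a : PowerSeries ℚ)) = 0 := by
        rw [← mul_one ((a : PowerSeries ℚ)), D_natCast_mul, D_one, mul_zero]
      simp [h0]
    | (i+1) =>
      rw [D_natCast_mul, D_pow_succ, Nat.add_sub_cancel]
      push_cast
      ring

/-- For every `k ≥ 0`, `D^k(Z²)` is a polynomial in `Z` with nonnegative integer
coefficients, of degree `2k+2`, with leading coefficient `(2k)!! = 2^k·k!`. -/
theorem D_iter_Z_sq_poly (k : ℕ) :
    ∃ P : Polynomial ℕ,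
      P.natDegree = 2 * k + 2 ∧
      P.leadingCoeff = 2 ^ k * k.factorial ∧
      D^[k] (Z ^ 2) = Polynomial.eval₂ (Nat.castRingHom (PowerSeries ℚ)) Z P := by
  induction k with
  | zero =>
    refine ⟨Polynomial.X^2, ?_, ?_, ?_⟩
    · simp
    · simp [(Polynomial.monic_X_pow 2 (R := ℕ)).leadingCoeff]
    · simp
  | succ k ih =>
    obtain ⟨P, hdeg, hlc, heq⟩ := ih
    set Qp : Polynomial ℕ := Polynomial.X^3 + 2*Polynomial.X^2 + Polynomial.X with hQp
    have hQdeg : Qp.natDegree = 3 := by rw [hQp]; compute_degree!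
    have hQlc : Qp.leadingCoeff = 1 := by
      rw [Polynomial.leadingCoeff, hQdeg, hQp]
      simp [Polynomial.coeff_X, Polynomial.coeff_X_pow]
    have hQne : Qp ≠ 0 := fun h => by simp [h] at hQlc
    have hc : (Polynomial.derivative P).coeff (2*k+1) = 2^k * k.factorial * (2*k+2) := by
      rw [Polynomial.coeff_derivative]
      have e : 2*k+1+1 = P.natDegree := by omega
      rw [e, Polynomial.coeff_natDegree, hlc, hdeg]
      push_cast [Nat.cast_id]
      ring
    have hcne : (2:ℕ)^k * k.factorial * (2*k+2) ≠ 0 := by positivity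
    have hd1 : (Polynomial.derivative P).natDegree = 2*k+1 := by
      refine le_antisymm ?_ (Polynomial.le_natDegree_of_ne_zero (by rw [hc]; exact hcne))
      have := Polynomial.natDegree_derivative_le P
      omega
    have hdne : Polynomial.derivative P ≠ 0 := fun h => by
      rw [h, Polynomial.coeff_zero] at hc; exact hcne hc.symm
    have hlc1 : (Polynomial.derivative P).leadingCoeff = 2^k * k.factorial * (2*k+2) := by
      rw [Polynomial.leadingCoeff, hd1, hc]
    refine ⟨Polynomial.derivative P * Qp, ?_, ?_, ?_⟩
    · rw [Polynomial.natDegree_mul hdne hQne, hd1, hQdeg]; ring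
    · rw [Polynomial.leadingCoeff_mul, hlc1, hQlc, mul_one, Nat.factorial_succ]
      ring
    · rw [Function.iterate_succ_apply', heq, D_eval₂, Polynomial.eval₂_mul]
      congr 1
      rw [D_Z, hQp]
      simp only [Polynomial.eval₂_add, Polynomial.eval₂_mul, Polynomial.eval₂_pow,
        Polynomial.eval₂_X, Polynomial.eval₂_ofNat]
      ring
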